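/- arXiv:1103.4212 — 4 statements merged into one kernel-verified Lean document; each statement's English description precedes it below -/
import Mathlib

section
/- Let F be a number field with adèle ring 𝔸. Define F⟨t⟩ = F((t)) ∩ 𝔸⟨t⟩, i.e. the set of Laurent series Σ aᵢtⁱ ∈ F((t)) such that aᵢ ∈ 𝒪_v for all i for almost all finite places v (uniformly in i is not required; the condition is that the series lies in 𝒪_v((t)) for almost all v). Then F⟨t⟩ is a subfield of F((t)). -/
/-!
For each finite place `v`, the series with all coefficients in `𝒪_v` form the subring
`𝒪_v((t))`, so the series lying in `𝒪_v((t))` for almost all `v` form a subring. For inverses: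
if `x ∈ 𝒪_v((t))` and its leading coefficient `a` is a `v`-unit, then `x` is a unit of
`𝒪_v((t))`, so `x⁻¹ ∈ 𝒪_v((t))`; and `a⁻¹ ∈ 𝒪_v` for almost all `v`.
-/

namespace Subring

variable {ι R : Type*} [Ring R]

def eventually (l : Filter ι) (A : ι → Subring R) : Subring R where
  carrier := {x | ∀ᶠ i in l, x ∈ A i}
  zero_mem' := .of_forall fun i ↦ (A i).zero_mem
  one_mem' := .of_forall fun i ↦ (A i).one_mem
  add_mem' ha hb := (ha.and hb).mono fun i h ↦ (A i).add_mem h.1 h.2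
  mul_mem' ha hb := (ha.and hb).mono fun i h ↦ (A i).mul_mem h.1 h.2
  neg_mem' ha := ha.mono fun i h ↦ (A i).neg_mem h

end Subring

namespace HahnSeries

section CoeffSubring

variable {Γ R : Type*} [PartialOrder Γ] [AddCommMonoid Γ] [IsOrderedCancelAddMonoid Γ] [Ring R]

def coeffSubring (O : Subring R) : Subring (HahnSeries Γ R) where
  carrier := {x | ∀ g, x.coeff g ∈ O}
  zero_mem' _ := O.zero_mem
  one_mem' g := by
    rw [coeff_one]
    split_ifs
    exacts [O.one_mem, O.zero_mem]
  add_mem' ha hb g := O.add_mem (ha g) (hb g)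
  mul_mem' ha hb g := by
    rw [coeff_mul]
    exact O.sum_mem fun ij _ ↦ O.mul_mem (ha ij.1) (hb ij.2)
  neg_mem' ha g := O.neg_mem (ha g)

theorem map_subtype_mem_coeffSubring {O : Subring R} (X : HahnSeries Γ O) :
    X.map O.subtype ∈ coeffSubring O :=
  fun g ↦ (X.coeff g).2

theorem exists_map_subtype_eq {O : Subring R} {x : HahnSeries Γ R} (hx : x ∈ coeffSubring O) :
    ∃ X : HahnSeries Γ O, X.map O.subtype = x :=
  ⟨⟨fun g ↦ ⟨x.coeff g, hx g⟩, x.isPWO_support.mono fun g hg ↦ by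
    simpa [Subtype.ext_iff] using hg⟩, rfl⟩

end CoeffSubring

section Order

variable {Γ R S F : Type*} [Zero Γ] [LinearOrder Γ] [Zero R] [Zero S] [FunLike F R S]
  [ZeroHomClass F R S] {f : F}

theorem order_map_of_injective (hf : Function.Injective f) (x : HahnSeries Γ R) :
    (x.map f).order = x.order := by
  have hcoeff (g : Γ) : (x.map f).coeff g = 0 ↔ x.coeff g = 0 := by
    rw [map_coeff, ← map_zero f, hf.eq_iff]
  obtain rfl | hx := eq_or_ne x 0
  · have : (0 : HahnSeries Γ R).map f = 0 := by ext; simp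
    rw [this, order_zero, order_zero]
  have hmap : (x.map f).coeff x.order ≠ 0 := (hcoeff _).not.mpr (coeff_order_eq_zero.not.mpr hx)
  refine le_antisymm (order_le_of_coeff_ne_zero hmap) (order_le_of_coeff_ne_zero ?_)
  exact (hcoeff _).not.mp (coeff_order_eq_zero.not.mpr (ne_zero_of_coeff_ne_zero hmap))

theorem leadingCoeff_map_of_injective (hf : Function.Injective f) (x : HahnSeries Γ R) :
    (x.map f).leadingCoeff = f x.leadingCoeff := by
  rw [leadingCoeff_eq, leadingCoeff_eq, order_map_of_injective hf, map_coeff]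

end Order

variable {Γ K : Type*} [AddCommGroup Γ] [LinearOrder Γ] [IsOrderedAddMonoid Γ] [Field K]

theorem inv_mem_coeffSubring {O : Subring K} {x : HahnSeries Γ K} (hx : x ∈ coeffSubring O)
    (hlead : x.leadingCoeff⁻¹ ∈ O) : x⁻¹ ∈ coeffSubring O := by
  obtain rfl | hx0 := eq_or_ne x 0
  · simp
  obtain ⟨X, rfl⟩ := exists_map_subtype_eq hx
  rw [leadingCoeff_map_of_injective O.subtype_injective] at hlead
  have hX0 : (X.leadingCoeff : K) ≠ 0 := by
    rw [Ne, ZeroMemClass.coe_eq_zero, leadingCoeff_eq_zero, ← Ne]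
    rintro rfl
    exact hx0 (by ext; simp)
  obtain ⟨U, rfl⟩ : IsUnit X :=
    isUnit_iff.mpr <| .of_mul_eq_one ⟨_, hlead⟩ <| Subtype.ext <| mul_inv_cancel₀ hX0
  have : (U : HahnSeries Γ O).map O.subtype * (↑U⁻¹ : HahnSeries Γ O).map O.subtype = 1 := by
    have h :=
      HahnSeries.map_mul (O.subtype : O →ₙ+* K) (x := (U : HahnSeries Γ O)) (y := ↑U⁻¹)
    rw [U.mul_inv] at h
    exact h.symm.trans (HahnSeries.map_one O.subtype.toMonoidWithZeroHom)
  rw [inv_eq_of_mul_eq_one_right this]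
  exact map_subtype_mem_coeffSubring _

end HahnSeries

namespace IsDedekindDomain

variable (R K : Type*) [CommRing R] [IsDedekindDomain R] [Field K] [Algebra R K]
  [IsFractionRing R K]

theorem HeightOneSpectrum.eventually_mem_integer (k : K) :
    ∀ᶠ v : HeightOneSpectrum R in Filter.cofinite, k ∈ (v.valuation K).integer :=
  Filter.eventually_cofinite.mpr <| (Support.finite R k).subset fun _ hv ↦ by
    simpa [Support, Valuation.mem_integer_iff] using hv

noncomputable def almostIntegralHahnSeries (Γ : Type*) [AddCommGroup Γ] [LinearOrder Γ]
    [IsOrderedAddMonoid Γ] : Subfield (HahnSeries Γ K) :=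
  { Subring.eventually Filter.cofinite fun v : HeightOneSpectrum R ↦
      HahnSeries.coeffSubring (v.valuation K).integer with
    inv_mem' x hx := by
      filter_upwards [hx, HeightOneSpectrum.eventually_mem_integer R K x.leadingCoeff⁻¹]
        with v using HahnSeries.inv_mem_coeffSubring }

end IsDedekindDomain

open IsDedekindDomain

theorem Ft_is_subfield (F : Type*) [Field F] [NumberField F] :
    ∃ K' : Subfield (LaurentSeries F),
      (K' : Set (LaurentSeries F)) =
        {x : LaurentSeries F |
          {v : HeightOneSpectrum (NumberField.RingOfIntegers F) |
            ¬ ∀ i : ℤ, v.valuation F (x.coeff i) ≤ 1}.Finite} :=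
  ⟨almostIntegralHahnSeries (NumberField.RingOfIntegers F) F ℤ, rfl⟩
end

section
/- Let F be a number field with adèle ring 𝔸. The natural map 𝔸⟨t⟩₊/F⟨t⟩₊ → 𝔸[[t]]/F[[t]] ≅ ∏_{i=0}^∞ (𝔸/F) is an isomorphism of abelian groups. -/
/-!
STATEMENT 9: Let `F` be a number field with adèle ring `𝔸`.  The natural map
`𝔸⟨t⟩₊/F⟨t⟩₊ → 𝔸[[t]]/F[[t]] ≅ ∏_{i=0}^∞ (𝔸/F)` is an isomorphism of abelian
groups.

We model `𝔸[[t]]` as `PowerSeries (AdeleRing (RingOfIntegers F) F)`; `𝔸⟨t⟩₊` is the subset of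
power series `x` such that for all but finitely many finite places `v`, every
coefficient of `x` is integral at `v`; `F[[t]]` sits inside via
`PowerSeries.map (algebraMap F 𝔸)`, and `F⟨t⟩₊ = F[[t]] ∩ 𝔸⟨t⟩₊` (for an
`F`-power series `f` the integrality condition is automatic from that of its
adelic image).  The isomorphism statement is expressed as: the coefficientwise
map from `𝔸⟨t⟩₊` to `∏_{n} 𝔸/F` is surjective (every element of
`𝔸[[t]]/F[[t]] ≅ ∏ 𝔸/F` is represented by an element of `𝔸⟨t⟩₊`), and two
elements of `𝔸⟨t⟩₊` have the same image iff they differ by an element of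
`F⟨t⟩₊`.
-/

open IsDedekindDomain NumberField

variable (F : Type*) [Field F] [NumberField F]

/-- The condition that a power series with adelic coefficients lies in `𝔸⟨t⟩₊`:
at all but finitely many finite places, all of its coefficients are integral. -/
def IsRestrictedPS (x : PowerSeries (AdeleRing (RingOfIntegers F) F)) : Prop :=
  {v : HeightOneSpectrum (RingOfIntegers F) |
    ¬ ∀ n : ℕ, (PowerSeries.coeff n x).2 v ∈ v.adicCompletionIntegers F}.Finite

/-!
Coefficientwise, surjectivity is `𝔸 = F + 𝔸_{S∞}`: every finite adele `a` is congruent modulo `F`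
to an integral one. Choose `0 ≠ r ∈ 𝒪_F` with `r a` integral. Since `𝒪_F` is dense in each `𝒪_v`,
the Chinese remainder theorem at the finitely many `v ∣ r` gives `b ∈ 𝒪_F` with
`r a ≡ b (mod r 𝒪_v)` for every `v`, and then `a - b / r` is integral everywhere.
Injectivity holds because an `F`-power series whose image is a difference of two elements of
`𝔸⟨t⟩₊` lies in `𝔸⟨t⟩₊` itself.
-/

open IsDedekindDomain.HeightOneSpectrum

namespace IsDedekindDomain.HeightOneSpectrum

variable {R : Type*} [CommRing R] [IsDedekindDomain R] {K : Type*} [Field K]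
  [Algebra R K] [IsFractionRing R K] (v : HeightOneSpectrum R)

theorem exists_valued_sub_algebraMap_le (c : v.adicCompletion K) {d : v.adicCompletion K}
    (hd : d ≠ 0) : ∃ k : K, Valued.v (c - algebraMap K _ k) ≤ Valued.v d := by
  have hopen : IsOpen ((fun y => (c - y) / d) ⁻¹' (v.adicCompletionIntegers K : Set _)) :=
    (Valued.isOpen_valuationSubring _).preimage (by fun_prop)
  obtain ⟨k, hk⟩ :=
    (denseRange_algebraMap (K := K) v).exists_mem_open hopen ⟨c, by simp⟩
  refine ⟨k, ?_⟩
  simpa [mem_adicCompletionIntegers, div_le_one₀ ((Valued.v).pos_iff.2 hd)] using hk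

theorem valuedAdicCompletion_algebraMap (k : K) :
    Valued.v (algebraMap K (v.adicCompletion K) k) = v.valuation K k :=
  valuedAdicCompletion_eq_valuation' v k

theorem valuedAdicCompletion_algebraMap_eq_intValuation (r : R) :
    Valued.v (algebraMap R (v.adicCompletion K) r) = v.intValuation r := by
  rw [IsScalarTower.algebraMap_apply R K, valuedAdicCompletion_algebraMap, valuation_of_algebraMap]

theorem exists_valued_sub_algebraMap_le_intValuation {c : v.adicCompletion K}
    (hc : c ∈ v.adicCompletionIntegers K) {r : R} (hr : r ≠ 0) :
    ∃ b : R, Valued.v (c - algebraMap R _ b) ≤ v.intValuation r := by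
  have hr0 : v.intValuation r ≠ 0 := v.intValuation_ne_zero r hr
  obtain ⟨k, hk⟩ := exists_valued_sub_algebraMap_le v c (d := algebraMap R _ r)
    ((Valuation.ne_zero_iff _).1
      (by rwa [valuedAdicCompletion_algebraMap_eq_intValuation]))
  rw [valuedAdicCompletion_algebraMap_eq_intValuation] at hk
  have hk_int : v.valuation K k ≤ 1 := by
    rw [← valuedAdicCompletion_algebraMap, ← sub_sub_cancel c (algebraMap K _ k)]
    exact Valuation.map_sub_le _ hc (hk.trans (v.intValuation_le_one r))
  obtain ⟨b, hb⟩ := exists_valuation_sub_lt_of_integer v hk_int (Units.mk0 _ hr0)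
  refine ⟨b, ?_⟩
  rw [← sub_add_sub_cancel c (algebraMap K _ k)]
  refine Valuation.map_add_le _ hk ?_
  rw [IsScalarTower.algebraMap_apply R K, ← map_sub, valuedAdicCompletion_algebraMap,
    Valuation.map_sub_swap]
  exact hb.le

theorem exists_forall_valued_sub_algebraMap_le_intValuation
    (c : ∀ v : HeightOneSpectrum R, v.adicCompletion K)
    (hc : ∀ v, c v ∈ v.adicCompletionIntegers K) {r : R} (hr : r ≠ 0) :
    ∃ b : R, ∀ v, Valued.v (c v - algebraMap R _ b) ≤ v.intValuation r := by
  have hspan : Ideal.span {r} ≠ 0 := by simpa [Ideal.span_singleton_eq_bot] using hr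
  set S := (Ideal.finite_factors hspan).toFinset
  choose b hb using fun v => exists_valued_sub_algebraMap_le_intValuation v (hc v) hr
  obtain ⟨b₀, hb₀⟩ := exists_forall_sub_mem_ideal (s := S) (fun v => v.asIdeal)
    (fun v => multiplicity v.asIdeal (Ideal.span {r})) (fun v _ => v.prime)
    (fun v _ w _ hvw h => hvw (HeightOneSpectrum.ext h)) (fun v => b v)
  refine ⟨b₀, fun v => ?_⟩
  by_cases hv : v ∈ S
  · rw [← sub_sub_sub_cancel_right (c v) (algebraMap R _ b₀) (algebraMap R _ (b v)),
      ← map_sub]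
    refine Valuation.map_sub_le _ (hb v) ?_
    rw [valuedAdicCompletion_algebraMap_eq_intValuation, v.intValuation_eq_exp_neg_multiplicity hr,
      intValuation_le_pow_iff_mem]
    exact hb₀ v hv
  · have hr1 : v.intValuation r = 1 := by
      refine (v.intValuation_le_one r).antisymm (not_lt.1 fun hlt => hv ?_)
      simpa [S] using (v.intValuation_lt_one_iff_dvd r).1 hlt
    rw [hr1]
    refine Valuation.map_sub_le _ (hc v) ?_
    rw [valuedAdicCompletion_algebraMap_eq_intValuation]
    exact v.intValuation_le_one _

end IsDedekindDomain.HeightOneSpectrum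

namespace IsDedekindDomain.FiniteAdeleRing

variable {R : Type*} [CommRing R] [IsDedekindDomain R] {K : Type*} [Field K]
  [Algebra R K] [IsFractionRing R K]

theorem exists_mul_algebraMap_mem_adicCompletionIntegers (a : FiniteAdeleRing R K) :
    ∃ r : R, r ≠ 0 ∧ ∀ v, a v * algebraMap R _ r ∈ v.adicCompletionIntegers K := by
  classical
  have hfin : {v : HeightOneSpectrum R | a v ∉ v.adicCompletionIntegers K}.Finite :=
    Filter.eventually_cofinite.mp a.2
  choose b hb hab using fun v : HeightOneSpectrum R =>
    adicCompletion.mul_nonZeroDivisor_mem_adicCompletionIntegers (K := K) v (a v)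
  refine ⟨∏ v ∈ hfin.toFinset, b v, nonZeroDivisors.ne_zero (prod_mem fun v _ => hb v),
    fun v => ?_⟩
  by_cases hv : v ∈ hfin.toFinset
  · rw [← Finset.mul_prod_erase _ _ hv, map_mul, ← mul_assoc]
    exact mul_mem (hab v) (coe_mem_adicCompletionIntegers v _)
  · exact mul_mem (by simpa using hv) (coe_mem_adicCompletionIntegers v _)

theorem exists_sub_algebraMap_mem_adicCompletionIntegers (a : FiniteAdeleRing R K) :
    ∃ k : K, ∀ v, a v - algebraMap K _ k ∈ v.adicCompletionIntegers K := by
  obtain ⟨r, hr, har⟩ := exists_mul_algebraMap_mem_adicCompletionIntegers a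
  obtain ⟨b, hb⟩ := exists_forall_valued_sub_algebraMap_le_intValuation _ har hr
  refine ⟨algebraMap R K b / algebraMap R K r, fun v => ?_⟩
  have hr0 : v.intValuation r ≠ 0 := v.intValuation_ne_zero r hr
  have hr' : algebraMap R (v.adicCompletion K) r ≠ 0 := by
    rw [← Valuation.ne_zero_iff Valued.v, valuedAdicCompletion_algebraMap_eq_intValuation]
    exact hr0
  have hdiv : a v - algebraMap K _ (algebraMap R K b / algebraMap R K r) =
      (a v * algebraMap R _ r - algebraMap R _ b) / algebraMap R _ r := by
    rw [map_div₀, ← IsScalarTower.algebraMap_apply, ← IsScalarTower.algebraMap_apply,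
      sub_div, mul_div_cancel_right₀ _ hr']
  rw [mem_adicCompletionIntegers, hdiv, map_div₀, valuedAdicCompletion_algebraMap_eq_intValuation,
    div_le_one₀ (zero_lt_iff.2 hr0)]
  exact hb v

end IsDedekindDomain.FiniteAdeleRing

theorem NumberField.AdeleRing.exists_sub_algebraMap_mem_adicCompletionIntegers
    {R : Type*} [CommRing R] [IsDedekindDomain R] {K : Type*} [Field K]
    [Algebra R K] [IsFractionRing R K] (a : AdeleRing R K) :
    ∃ k : K, ∀ v, (a - algebraMap K (AdeleRing R K) k).2 v ∈ v.adicCompletionIntegers K :=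
  FiniteAdeleRing.exists_sub_algebraMap_mem_adicCompletionIntegers a.2

section PowerSeries

variable {F}

theorem IsRestrictedPS.sub {x y : PowerSeries (AdeleRing (RingOfIntegers F) F)}
    (hx : IsRestrictedPS F x) (hy : IsRestrictedPS F y) : IsRestrictedPS F (x - y) := by
  refine (hx.union hy).subset fun v hv => ?_
  by_contra hxy
  simp only [Set.mem_union, Set.mem_ofPred_eq, not_or, not_not] at hxy
  exact hv fun n => by rw [map_sub]; exact sub_mem (hxy.1 n) (hxy.2 n)

theorem isRestrictedPS_map_iff (f : PowerSeries F) :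
    IsRestrictedPS F (PowerSeries.map (algebraMap F (AdeleRing (RingOfIntegers F) F)) f) ↔
      {v : HeightOneSpectrum (RingOfIntegers F) |
        ¬ ∀ n : ℕ, v.valuation F (PowerSeries.coeff n f) ≤ 1}.Finite := by
  simp [IsRestrictedPS, mem_adicCompletionIntegers]

theorem exists_isRestrictedPS_eq_add_map (x : PowerSeries (AdeleRing (RingOfIntegers F) F)) :
    ∃ g, IsRestrictedPS F g ∧ ∃ f : PowerSeries F,
      x = g + PowerSeries.map (algebraMap F (AdeleRing (RingOfIntegers F) F)) f := by
  choose k hk using fun n =>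
    AdeleRing.exists_sub_algebraMap_mem_adicCompletionIntegers (PowerSeries.coeff n x)
  refine ⟨_, ?_, PowerSeries.mk k, (sub_add_cancel x _).symm⟩
  refine Set.finite_empty.subset fun v hv => hv fun n => ?_
  simpa using hk n v

end PowerSeries

theorem adelic_power_series_quotient_iso :
    -- surjectivity: every `𝔸[[t]]` class mod `F[[t]]` has a representative in `𝔸⟨t⟩₊`
    (∀ x : PowerSeries (AdeleRing (RingOfIntegers F) F), ∃ g : PowerSeries (AdeleRing (RingOfIntegers F) F),
      IsRestrictedPS F g ∧ ∃ f : PowerSeries F,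
        x = g + PowerSeries.map (algebraMap F (AdeleRing (RingOfIntegers F) F)) f) ∧
    -- injectivity: if two elements of `𝔸⟨t⟩₊` differ by an element of `F[[t]]`,
    -- then they differ by an element of `F⟨t⟩₊`
    (∀ x y : PowerSeries (AdeleRing (RingOfIntegers F) F), IsRestrictedPS F x → IsRestrictedPS F y →
      (∃ f : PowerSeries F, x - y = PowerSeries.map (algebraMap F (AdeleRing (RingOfIntegers F) F)) f) →
      (∃ f : PowerSeries F,
        x - y = PowerSeries.map (algebraMap F (AdeleRing (RingOfIntegers F) F)) f ∧
        {v : HeightOneSpectrum (RingOfIntegers F) |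
          ¬ ∀ n : ℕ, v.valuation F (PowerSeries.coeff n f) ≤ 1}.Finite)) := by
  exact ⟨exists_isRestrictedPS_eq_add_map, fun x y hx hy ⟨f, hf⟩ =>
    ⟨f, hf, (isRestrictedPS_map_iff f).1 (hf ▸ hx.sub hy)⟩⟩
end

section
/- Let F be a number field with adèle ring 𝔸. For every x ∈ 1 + t𝔸[[t]] there exists y ∈ 1 + tF[[t]] such that xy ∈ 1 + t𝔸⟨t⟩₊; consequently the natural map (1 + t𝔸⟨t⟩₊)/(1 + tF⟨t⟩₊) → (1 + t𝔸[[t]])/(1 + tF[[t]]) is an isomorphism of abelian groups. -/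
/-!
STATEMENT 10: Let `F` be a number field with adèle ring `𝔸`.  For every
`x ∈ 1 + t𝔸[[t]]` there exists `y ∈ 1 + tF[[t]]` such that
`x·y ∈ 1 + t𝔸⟨t⟩₊`; consequently the natural map
`(1 + t𝔸⟨t⟩₊)/(1 + tF⟨t⟩₊) → (1 + t𝔸[[t]])/(1 + tF[[t]])` is an isomorphism
of (multiplicative) abelian groups.

Notation as in Statement 9: `𝔸[[t]] = PowerSeries (AdeleRing (RingOfIntegers F) F)`,
`x ∈ 1 + t𝔸[[t]]` means `constantCoeff x = 1`, and `𝔸⟨t⟩₊` is the set of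
power series all of whose coefficients are integral at all but finitely many
finite places.  The isomorphism is expressed by: surjectivity — every class of
`(1 + t𝔸[[t]])/(1 + tF[[t]])` has a representative in `1 + t𝔸⟨t⟩₊` (this is
the displayed existence claim) — and injectivity: if two elements of
`1 + t𝔸⟨t⟩₊` differ multiplicatively by an element of `1 + tF[[t]]`, then
that element lies in `1 + tF⟨t⟩₊`.
-/

open IsDedekindDomain NumberField

variable (F : Type*) [Field F] [NumberField F]

/-- The condition that a power series over `F` lies in `F⟨t⟩`. -/
def IsRestrictedPSF (f : PowerSeries F) : Prop :=
  {v : HeightOneSpectrum (RingOfIntegers F) |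
    ¬ ∀ n : ℕ, v.valuation F (PowerSeries.coeff n f) ≤ 1}.Finite

/-!
The finite adeles are `F + ∏_v 𝒪_v`: clear the denominators of an adele by some `b ∈ 𝓞 F`, then
approximate the resulting integral adele modulo `b` by an element of `𝓞 F` (density of `F` in
each completion, glued by the Chinese remainder theorem). As the constant term of `x` is `1`, the
`n`-th coefficient of `x y` is `y_n` plus an expression in `y_0, …, y_{n-1}`, so the `y_n ∈ F` can
be chosen one at a time to make every coefficient of `x y` integral at every finite place.
Conversely, a power series with constant term `1` and coefficients in a subring `S` is a unit of
`S[[t]]`, so `y = x'⁻¹ x` is integral wherever `x` and `x'` are.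
-/

open IsDedekindDomain.HeightOneSpectrum

namespace IsDedekindDomain.HeightOneSpectrum

variable {R K : Type*} [CommRing R] [IsDedekindDomain R] [Field K] [Algebra R K]
  [IsFractionRing R K]

theorem valued_algebraMap_eq_valuation (v : HeightOneSpectrum R) (k : K) :
    Valued.v (algebraMap K (v.adicCompletion K) k) = v.valuation K k :=
  valuedAdicCompletion_eq_valuation' v k

theorem valued_algebraMap_eq_intValuation (v : HeightOneSpectrum R) (r : R) :
    Valued.v (algebraMap R (v.adicCompletion K) r) = v.intValuation r :=
  (valuedAdicCompletion_eq_valuation v r).trans (valuation_of_algebraMap v r)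

theorem exists_valued_sub_le_intValuation (v : HeightOneSpectrum R) {c : v.adicCompletion K}
    (hc : c ∈ v.adicCompletionIntegers K) {b : R} (hb : b ≠ 0) :
    ∃ r : R, Valued.v (c - algebraMap R (v.adicCompletion K) r) ≤ v.intValuation b := by
  set β := algebraMap R (v.adicCompletion K) b
  have hβ : Valued.v β = v.intValuation b := valued_algebraMap_eq_intValuation v b
  have hβ0 : v.intValuation b ≠ 0 := v.intValuation_ne_zero b hb
  have hopen : IsOpen ((fun y => (y - c) * β⁻¹) ⁻¹' (v.adicCompletionIntegers K : Set _)) :=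
    (Valued.isOpen_valuationSubring _).preimage ((continuous_sub_right c).mul continuous_const)
  obtain ⟨k, hk⟩ := (denseRange_algebraMap K v).exists_mem_open hopen ⟨c, by simp⟩
  have hkc : Valued.v (algebraMap K _ k - c) ≤ v.intValuation b := by
    have := (mem_adicCompletionIntegers R K v).1 hk
    rwa [map_mul, map_inv₀, hβ, mul_inv_le_iff₀ (zero_lt_iff.2 hβ0), one_mul] at this
  have hk1 : v.valuation K k ≤ 1 := by
    rw [← valued_algebraMap_eq_valuation, ← sub_add_cancel (algebraMap K _ k) c]
    exact Valuation.map_add_le _ (hkc.trans (v.intValuation_le_one b)) hc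
  obtain ⟨r, hr⟩ := exists_valuation_sub_lt_of_integer v hk1 (Units.mk0 _ hβ0)
  refine ⟨r, ?_⟩
  have hrk : Valued.v (algebraMap K _ k - algebraMap R (v.adicCompletion K) r) ≤
      v.intValuation b := by
    rw [IsScalarTower.algebraMap_apply R K, ← map_sub, valued_algebraMap_eq_valuation,
      Valuation.map_sub_swap]
    exact hr.le
  rw [← sub_add_sub_cancel c (algebraMap K _ k)]
  exact Valuation.map_add_le _ (by rwa [Valuation.map_sub_swap]) hrk

theorem exists_forall_valued_sub_le_intValuation {b : R} (hb : b ≠ 0)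
    {c : ∀ v : HeightOneSpectrum R, v.adicCompletion K}
    (hc : ∀ v, c v ∈ v.adicCompletionIntegers K) :
    ∃ g : R, ∀ v, Valued.v (c v - algebraMap R (v.adicCompletion K) g) ≤ v.intValuation b := by
  choose r hr using fun v => exists_valued_sub_le_intValuation v (hc v) hb
  have hfin := Ideal.finite_factors (I := Ideal.span {b}) (by simpa using hb)
  obtain ⟨g, hg⟩ := IsDedekindDomain.exists_forall_sub_mem_ideal (s := hfin.toFinset)
    (fun v => v.asIdeal) (fun v => multiplicity v.asIdeal (Ideal.span {b}))
    (fun v _ => v.prime) (fun v _ w _ hne h => hne (HeightOneSpectrum.ext h)) (fun v => r v)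
  have hrg : ∀ v : HeightOneSpectrum R, v.intValuation (r v - g) ≤ v.intValuation b := by
    intro v
    rw [intValuation_eq_exp_neg_multiplicity v hb, intValuation_le_pow_iff_mem, ← neg_sub]
    by_cases hv : v ∈ hfin.toFinset
    · exact neg_mem (hg v hv)
    · rw [multiplicity_eq_zero.2 (by simpa using hv), pow_zero, Ideal.one_eq_top]
      trivial
  refine ⟨g, fun v => ?_⟩
  rw [← sub_add_sub_cancel _ (algebraMap R _ (r v)), ← map_sub]
  exact Valuation.map_add_le _ (hr v) ((valued_algebraMap_eq_intValuation v _).trans_le (hrg v))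

end IsDedekindDomain.HeightOneSpectrum

namespace IsDedekindDomain.FiniteAdeleRing

variable {R K : Type*} [CommRing R] [IsDedekindDomain R] [Field K] [Algebra R K]
  [IsFractionRing R K]

open scoped nonZeroDivisors

theorem exists_nonZeroDivisor_forall_mul_mem (a : FiniteAdeleRing R K) :
    ∃ b ∈ R⁰, ∀ v : HeightOneSpectrum R,
      a v * algebraMap R (v.adicCompletion K) b ∈ v.adicCompletionIntegers K := by
  classical
  have hfin : {v : HeightOneSpectrum R | a v ∉ v.adicCompletionIntegers K}.Finite :=
    Filter.eventually_cofinite.1 a.2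
  choose e he using fun v => adicCompletion.mul_nonZeroDivisor_mem_adicCompletionIntegers v (a v)
  refine ⟨∏ v ∈ hfin.toFinset, e v, prod_mem fun v _ => (he v).1, fun v => ?_⟩
  by_cases hv : v ∈ hfin.toFinset
  · rw [← Finset.mul_prod_erase _ _ hv, map_mul, ← mul_assoc]
    exact mul_mem (he v).2 (coe_mem_adicCompletionIntegers v _)
  · exact mul_mem (by simpa using hv) (coe_mem_adicCompletionIntegers v _)

theorem exists_forall_add_algebraMap_mem (a : FiniteAdeleRing R K) :
    ∃ f : K, ∀ v : HeightOneSpectrum R,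
      a v + algebraMap K (v.adicCompletion K) f ∈ v.adicCompletionIntegers K := by
  obtain ⟨b, hb, hab⟩ := exists_nonZeroDivisor_forall_mul_mem a
  have hb0 : b ≠ 0 := nonZeroDivisors.ne_zero hb
  obtain ⟨g, hg⟩ := exists_forall_valued_sub_le_intValuation hb0 hab
  refine ⟨-(algebraMap R K g / algebraMap R K b), fun v => ?_⟩
  have hβ : Valued.v (algebraMap R (v.adicCompletion K) b) ≠ 0 := by
    rw [valued_algebraMap_eq_intValuation]; exact v.intValuation_ne_zero b hb0
  have hsum : a v + algebraMap K _ (-(algebraMap R K g / algebraMap R K b)) =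
      (a v * algebraMap R _ b - algebraMap R _ g) / algebraMap R (v.adicCompletion K) b := by
    rw [map_neg, map_div₀, ← IsScalarTower.algebraMap_apply, ← IsScalarTower.algebraMap_apply,
      sub_div, mul_div_cancel_right₀ _ ((Valuation.ne_zero_iff _).1 hβ), sub_eq_add_neg]
  rw [hsum, mem_adicCompletionIntegers, map_div₀,
    div_le_one₀ (zero_lt_iff.2 hβ), valued_algebraMap_eq_intValuation]
  exact hg v

end IsDedekindDomain.FiniteAdeleRing

namespace PowerSeries

section Correction

variable {F A : Type*} [Semiring F] [Semiring A]

theorem coeff_succ_mul_of_constantCoeff_eq_one {x : PowerSeries A} (hx : constantCoeff x = 1)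
    (z : PowerSeries A) (n : ℕ) :
    coeff (n + 1) (x * z) =
      (∑ k ∈ Finset.range (n + 1), coeff (k + 1) x * coeff (n - k) z) + coeff (n + 1) z := by
  rw [coeff_mul, Finset.Nat.sum_antidiagonal_eq_sum_range_succ_mk, Finset.sum_range_succ']
  simp only [coeff_zero_eq_constantCoeff_apply, hx, one_mul, Nat.sub_zero,
    Nat.succ_sub_succ]

variable (φ : F →+* A)

noncomputable def correctionCoeff (c : A → F) (x : PowerSeries A) : ℕ → F
  | 0 => 1
  | n + 1 => c (∑ k ∈ Finset.range (n + 1), coeff (k + 1) x * φ (correctionCoeff c x (n - k)))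

theorem exists_constantCoeff_eq_one_coeff_mul_map_mem {S : Set A} (h1 : 1 ∈ S)
    (hS : ∀ a, ∃ f, a + φ f ∈ S) {x : PowerSeries A} (hx : constantCoeff x = 1) :
    ∃ y : PowerSeries F, constantCoeff y = 1 ∧ ∀ n, coeff n (x * map φ y) ∈ S := by
  choose c hc using hS
  refine ⟨mk (correctionCoeff φ c x), by simp [correctionCoeff], ?_⟩
  rintro (_ | n)
  · rwa [coeff_zero_eq_constantCoeff_apply, map_mul, hx, one_mul,
      ← coeff_zero_eq_constantCoeff_apply, coeff_map, coeff_mk, correctionCoeff, map_one]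
  · rw [coeff_succ_mul_of_constantCoeff_eq_one hx]
    simp only [coeff_map, coeff_mk, correctionCoeff]
    exact hc _

end Correction

theorem coeff_mem_of_coeff_mul_mem {A : Type*} [CommRing A] {S : Subring A}
    {x z : PowerSeries A} (hx0 : constantCoeff x = 1) (hx : ∀ n, coeff n x ∈ S)
    (hxz : ∀ n, coeff n (x * z) ∈ S) (n : ℕ) : coeff n z ∈ S := by
  set xS : PowerSeries S := mk fun n => ⟨coeff n x, hx n⟩
  set wS : PowerSeries S := mk fun n => ⟨coeff n (x * z), hxz n⟩
  have hxS : map S.subtype xS = x := by ext n; simp [xS]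
  have hwS : map S.subtype wS = x * z := by ext n; simp [wS]
  obtain ⟨u, hu⟩ : IsUnit xS := by
    have h0 : (⟨coeff 0 x, hx 0⟩ : S) = 1 :=
      Subtype.ext ((coeff_zero_eq_constantCoeff_apply x).trans hx0)
    rw [isUnit_iff_constantCoeff, ← coeff_zero_eq_constantCoeff_apply, coeff_mk, h0]
    exact isUnit_one
  have hz : z = map S.subtype (↑u⁻¹ * wS) := by
    apply (hxS ▸ hu ▸ u.isUnit.map (map S.subtype) : IsUnit x).mul_left_cancel
    rw [map_mul, hwS, ← mul_assoc, ← hxS, ← hu, ← map_mul, Units.mul_inv, map_one, one_mul]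
  rw [hz, coeff_map]
  exact Subtype.property _

end PowerSeries

namespace NumberField.AdeleRing

variable (R K : Type*) [CommRing R] [IsDedekindDomain R] [Field K] [Algebra R K]
  [IsFractionRing R K]

def integralOutside (T : Set (HeightOneSpectrum R)) : Subring (AdeleRing R K) where
  carrier := {a | ∀ v ∉ T, a.2 v ∈ v.adicCompletionIntegers K}
  mul_mem' ha hb v hv := mul_mem (ha v hv) (hb v hv)
  one_mem' _ _ := one_mem _
  add_mem' ha hb v hv := add_mem (ha v hv) (hb v hv)
  zero_mem' _ _ := zero_mem _
  neg_mem' ha v hv := neg_mem (ha v hv)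

variable {R K}

theorem integralOutside_mono {T T' : Set (HeightOneSpectrum R)} (h : T ⊆ T') :
    integralOutside R K T ≤ integralOutside R K T' :=
  fun _ ha v hv => ha v fun hvT => hv (h hvT)

theorem algebraMap_mem_integralOutside_iff {T : Set (HeightOneSpectrum R)} (f : K) :
    algebraMap K (AdeleRing R K) f ∈ integralOutside R K T ↔
      ∀ v ∉ T, v.valuation K f ≤ 1 := by
  refine forall₂_congr fun v _ => ?_
  exact (mem_adicCompletionIntegers R K v).trans
    (iff_of_eq (congrArg (· ≤ 1) (valuedAdicCompletion_eq_valuation' v f)))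

variable (R K)

theorem exists_add_algebraMap_mem_integralOutside_empty (a : AdeleRing R K) :
    ∃ f : K, a + algebraMap K (AdeleRing R K) f ∈ integralOutside R K ∅ :=
  let ⟨f, hf⟩ := FiniteAdeleRing.exists_forall_add_algebraMap_mem a.2
  ⟨f, fun v _ => hf v⟩

end NumberField.AdeleRing

theorem isRestrictedPS_iff (x : PowerSeries (AdeleRing (𝓞 F) F)) :
    IsRestrictedPS F x ↔ ∃ T : Set (HeightOneSpectrum (𝓞 F)), T.Finite ∧
      ∀ n, PowerSeries.coeff n x ∈ AdeleRing.integralOutside (𝓞 F) F T := by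
  refine ⟨fun h => ⟨_, h, fun n v hv => not_not.1 hv n⟩, fun ⟨T, hT, h⟩ => ?_⟩
  exact hT.subset fun v hv => by_contra fun hvT => hv fun n => h n v hvT

theorem isRestrictedPSF_of_forall_algebraMap_mem {T : Set (HeightOneSpectrum (𝓞 F))}
    (hT : T.Finite) {y : PowerSeries F}
    (h : ∀ n, algebraMap F (AdeleRing (𝓞 F) F) (PowerSeries.coeff n y) ∈
      AdeleRing.integralOutside (𝓞 F) F T) :
    IsRestrictedPSF F y :=
  hT.subset fun v hv => by_contra fun hvT => hv fun n =>
    (AdeleRing.algebraMap_mem_integralOutside_iff _).1 (h n) v hvT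

theorem adelic_unit_power_series_quotient_iso :
    -- surjectivity: for every `x ∈ 1 + t𝔸[[t]]` there is `y ∈ 1 + tF[[t]]`
    -- with `x·y ∈ 1 + t𝔸⟨t⟩₊`
    (∀ x : PowerSeries (AdeleRing (RingOfIntegers F) F), PowerSeries.constantCoeff x = 1 →
      ∃ y : PowerSeries F, PowerSeries.constantCoeff y = 1 ∧
        IsRestrictedPS F (x * PowerSeries.map (algebraMap F (AdeleRing (RingOfIntegers F) F)) y)) ∧
    -- injectivity: if `x, x' ∈ 1 + t𝔸⟨t⟩₊` and `x = x'·y` with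
    -- `y ∈ 1 + tF[[t]]`, then `y ∈ 1 + tF⟨t⟩₊`
    (∀ x x' : PowerSeries (AdeleRing (RingOfIntegers F) F),
      PowerSeries.constantCoeff x = 1 → IsRestrictedPS F x →
      PowerSeries.constantCoeff x' = 1 → IsRestrictedPS F x' →
      ∀ y : PowerSeries F, PowerSeries.constantCoeff y = 1 →
        x = x' * PowerSeries.map (algebraMap F (AdeleRing (RingOfIntegers F) F)) y →
        IsRestrictedPSF F y) := by
  refine ⟨fun x hx => ?_, fun x x' _ hres hx' hres' y _ heq => ?_⟩
  · obtain ⟨y, hy0, hy⟩ := PowerSeries.exists_constantCoeff_eq_one_coeff_mul_map_mem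
      (algebraMap F _) (one_mem (AdeleRing.integralOutside (𝓞 F) F ∅))
      (AdeleRing.exists_add_algebraMap_mem_integralOutside_empty (𝓞 F) F) hx
    exact ⟨y, hy0, (isRestrictedPS_iff F _).2 ⟨∅, Set.finite_empty, hy⟩⟩
  · obtain ⟨T, hT, hxT⟩ := (isRestrictedPS_iff F x).1 hres
    obtain ⟨T', hT', hx'T'⟩ := (isRestrictedPS_iff F x').1 hres'
    refine isRestrictedPSF_of_forall_algebraMap_mem F (hT.union hT') fun n => ?_
    rw [← PowerSeries.coeff_map]
    exact PowerSeries.coeff_mem_of_coeff_mul_mem hx'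
      (fun n => AdeleRing.integralOutside_mono Set.subset_union_right (hx'T' n))
      (fun n => heq ▸ AdeleRing.integralOutside_mono Set.subset_union_left (hxT n)) n
end

section
/- Let Φ̃ be the affine root system of an untwisted affine Kac–Moody algebra with irreducible finite root system Φ. There exists κ ∈ ℕ such that for all w ∈ W̃ and every real root β = α + iδ ∈ Φ̃₊ ∩ wΦ̃₋ (α ∈ Φ, i ∈ ℤ≥0), one has 0 ≤ i < κ ℓ(w). -/
/-!
A simple affine reflection `s_{b,k}` (`k = 0` for `b ∈ Δ`, `k = 1` for `b = θ`) turns the affine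
function `x ↦ B(a, x) + c` into `x ↦ B(a', x) + c + k⟨a, b^∨⟩` with `a' ∈ Φ`, so it moves the
constant term by at most `C = ∑_{b ∈ Φ} |⟨b, θ^∨⟩|`. Along a reduced word for `w` the constant
term of `β` therefore moves by at most `ℓ(w) C`; as `w⁻¹β` is negative its constant term is `≤ 0`,
whence `i ≤ ℓ(w) C < (⌈C⌉ + 1) ℓ(w)`. When `ℓ(w) = 0` we have `w = 1`, and no affine root is both
positive and negative.
-/

section
variable {V : Type*} [AddCommGroup V] [Module ℝ V]

noncomputable def coroot (B : LinearMap.BilinForm ℝ V) (a : V) : V := (2 / B a a) • a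

noncomputable def affRefl (B : LinearMap.BilinForm ℝ V) (a : V) (k : ℝ) : Equiv.Perm V :=
  Function.Involutive.toPerm (fun x => x - (B a x - k) • coroot B a) (by
    intro x
    by_cases h : B a a = 0
    · simp [coroot, h, div_zero]
    · have hBc : B a (coroot B a) = 2 := by
        simp only [coroot, map_smul, smul_eq_mul]
        field_simp
      simp only [map_sub, map_smul, smul_eq_mul, hBc]
      have : B a x - (B a x - k) * 2 - k = -(B a x - k) := by ring
      rw [this]
      module)

noncomputable def wordLength (S : Set (Equiv.Perm V)) (g : Equiv.Perm V) : ℕ :=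
  sInf {n : ℕ | ∃ l : List (Equiv.Perm V),
    l.length = n ∧ (∀ s ∈ l, s ∈ S) ∧ l.prod = g}

noncomputable def simpleAffRefls (B : LinearMap.BilinForm ℝ V)
    (Δ : Finset V) (θ : V) : Set (Equiv.Perm V) :=
  ((fun a => affRefl B a 0) '' (Δ : Set V)) ∪ {affRefl B θ 1}

end

open Equiv

theorem Subgroup.exists_list_of_mem_closure_of_inv_mem {G : Type*} [Group G] {S : Set G}
    (hS : ∀ s ∈ S, s⁻¹ ∈ S) {g : G} (hg : g ∈ Subgroup.closure S) :
    ∃ l : List G, (∀ s ∈ l, s ∈ S) ∧ l.prod = g := by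
  have hS' : S⁻¹ ⊆ S := fun s hs => by simpa using hS _ hs
  rw [← Subgroup.mem_toSubmonoid, Subgroup.closure_toSubmonoid, Set.union_eq_left.2 hS'] at hg
  exact Submonoid.exists_list_of_mem_closure hg

theorem exists_list_length_eq_wordLength {V : Type*} {S : Set (Perm V)} {g : Perm V}
    (h : ∃ l : List (Perm V), (∀ s ∈ l, s ∈ S) ∧ l.prod = g) :
    ∃ l : List (Perm V), l.length = wordLength S g ∧ (∀ s ∈ l, s ∈ S) ∧ l.prod = g := by
  obtain ⟨l, hl⟩ := h
  exact Nat.sInf_mem (s := {n | ∃ l : List (Perm V), l.length = n ∧ _}) ⟨l.length, l, rfl, hl⟩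

theorem eq_one_of_wordLength_eq_zero {V : Type*} {S : Set (Perm V)} {g : Perm V}
    (h : ∃ l : List (Perm V), (∀ s ∈ l, s ∈ S) ∧ l.prod = g) (hg : wordLength S g = 0) :
    g = 1 := by
  obtain ⟨l, hlen, -, rfl⟩ := exists_list_length_eq_wordLength h
  rw [List.length_eq_zero_iff.1 (hlen.trans hg), List.prod_nil]

section
variable {V : Type*} [AddCommGroup V] [Module ℝ V]

theorem affRefl_inv (B : LinearMap.BilinForm ℝ V) (a : V) (k : ℝ) :
    (affRefl B a k)⁻¹ = affRefl B a k :=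
  Function.Involutive.toPerm_symm _

theorem inv_mem_simpleAffRefls {B : LinearMap.BilinForm ℝ V} {Δ : Finset V} {θ : V} :
    ∀ s ∈ simpleAffRefls B Δ θ, s⁻¹ ∈ simpleAffRefls B Δ θ := by
  rintro s (⟨b, hb, rfl⟩ | rfl)
  · exact Or.inl ⟨b, hb, (affRefl_inv B b 0).symm⟩
  · exact Or.inr (affRefl_inv B θ 1)

theorem apply_affRefl {B : LinearMap.BilinForm ℝ V} {a b : V} (hab : B a b = B b a)
    (k : ℝ) (x : V) :
    B a (affRefl B b k x) =
      B (a - (B b a * (2 / B b b)) • b) x + k * (B b a * (2 / B b b)) := by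
  change B a (x - (B b x - k) • coroot B b) = _
  simp only [coroot, map_sub, map_smul, smul_eq_mul, LinearMap.sub_apply,
    LinearMap.smul_apply, hab]
  ring

theorem eq_of_forall_bilin_eq {B : LinearMap.BilinForm ℝ V}
    (hpos : ∀ x : V, x ≠ 0 → 0 < B x x) {a b : V} (h : ∀ x, B a x = B b x) : a = b := by
  by_contra hab
  have hzero : B (a - b) (a - b) = 0 := by
    rw [map_sub B a b, LinearMap.sub_apply, h, sub_self]
  exact (hpos _ (sub_ne_zero.2 hab)).ne' hzero

def RootShiftBounded (B : LinearMap.BilinForm ℝ V) (Φ : Set V) (S : Set (Perm V))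
    (C : ℝ) : Prop :=
  ∀ s ∈ S, ∀ a ∈ Φ, ∃ a' ∈ Φ, ∃ d : ℝ, (∀ x, B a (s x) = B a' x + d) ∧ |d| ≤ C

theorem RootShiftBounded.list_prod {B : LinearMap.BilinForm ℝ V} {Φ : Set V}
    {S : Set (Perm V)} {C : ℝ} (hS : RootShiftBounded B Φ S C) {l : List (Perm V)}
    (hl : ∀ s ∈ l, s ∈ S) {a : V} (ha : a ∈ Φ) :
    ∃ a' ∈ Φ, ∃ d : ℝ, (∀ x, B a (l.prod x) = B a' x + d) ∧ |d| ≤ l.length * C := by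
  induction l generalizing a with
  | nil => exact ⟨a, ha, 0, by simp, by simp⟩
  | cons s l ih =>
    obtain ⟨a₁, ha₁, d₁, hs, hd₁⟩ := hS s (hl s List.mem_cons_self) a ha
    obtain ⟨a₂, ha₂, d₂, hl', hd₂⟩ := ih (fun t ht => hl t (List.mem_cons_of_mem _ ht)) ha₁
    refine ⟨a₂, ha₂, d₂ + d₁, fun x => ?_, ?_⟩
    · rw [List.prod_cons, Perm.mul_apply, hs, hl', add_assoc]
    · calc |d₂ + d₁| ≤ |d₂| + |d₁| := abs_add_le _ _
        _ ≤ l.length * C + C := add_le_add hd₂ hd₁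
        _ = (s :: l).length * C := by push_cast [List.length_cons]; ring

theorem rootShiftBounded_simpleAffRefls {B : LinearMap.BilinForm ℝ V}
    (hsymm : ∀ x y : V, B x y = B y x) {Φ Δ : Finset V} {θ : V}
    (hrefl : ∀ a ∈ Φ, ∀ b ∈ Φ, b - (B a b * (2 / B a a)) • a ∈ Φ)
    (hΔ : ∀ b ∈ Δ, b ∈ Φ) (hθ : θ ∈ Φ) :
    RootShiftBounded B Φ (simpleAffRefls B Δ θ) (∑ b ∈ Φ, |B θ b * (2 / B θ θ)|) := by
  rintro s (⟨b, hb, rfl⟩ | rfl) a ha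
  · refine ⟨_, hrefl b (hΔ b hb) a ha, _, apply_affRefl (hsymm a b) 0, ?_⟩
    rw [zero_mul, abs_zero]
    exact Finset.sum_nonneg fun _ _ => abs_nonneg _
  · refine ⟨_, hrefl θ hθ a ha, _, apply_affRefl (hsymm a θ) 1, ?_⟩
    rw [one_mul]
    exact Finset.single_le_sum (f := fun b => |B θ b * (2 / B θ θ)|)
      (fun _ _ => abs_nonneg _) ha

theorem not_pos_and_neg_affRoot {B : LinearMap.BilinForm ℝ V}
    (hpos : ∀ x : V, x ≠ 0 → 0 < B x x) {f : V →ₗ[ℝ] ℝ} {a a' : V} {i i' : ℤ}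
    (heq : ∀ x, B a x + (i : ℝ) = B a' x + (i' : ℝ))
    (hβ : 0 < i ∨ (i = 0 ∧ 0 < f a)) (hβ' : i' < 0 ∨ (i' = 0 ∧ f a' < 0)) : False := by
  have hii' : i = i' := by exact_mod_cast (by simpa using heq 0 : (i : ℝ) = i')
  subst hii'
  have haa' : a = a' := eq_of_forall_bilin_eq hpos fun x => by linarith [heq x]
  subst haa'
  rcases hβ with hi | ⟨hi, hfa⟩ <;> rcases hβ' with hi' | ⟨hi', hfa'⟩ <;>
    first | omega | linarith

theorem inversion_set_depth_bound_general
    (B : LinearMap.BilinForm ℝ V)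
    (hsymm : ∀ x y : V, B x y = B y x)
    (hpos : ∀ x : V, x ≠ 0 → 0 < B x x)
    (Φ : Finset V)
    (hrefl : ∀ a ∈ Φ, ∀ b ∈ Φ, b - (B a b * (2 / B a a)) • a ∈ Φ)
    (f : V →ₗ[ℝ] ℝ)
    (Φpos : Finset V) (hΦpos : ∀ a, a ∈ Φpos ↔ a ∈ Φ ∧ 0 < f a)
    (Δ : Finset V)
    (hΔ : ∀ a, a ∈ Δ ↔ a ∈ Φpos ∧ ¬ ∃ b ∈ Φpos, ∃ c ∈ Φpos, a = b + c)
    (θ : V) (hθ : θ ∈ Φpos) :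
    ∃ κ : ℕ, 0 < κ ∧
      ∀ w ∈ Subgroup.closure (simpleAffRefls B Δ θ),
        ∀ a ∈ Φ, ∀ i : ℤ, 0 ≤ i →
          -- `β = a + iδ` is a positive affine root
          (0 < i ∨ (i = 0 ∧ a ∈ Φpos)) →
          -- `w⁻¹β` is a negative affine root `(a', i')`
          (∃ a' ∈ Φ, ∃ i' : ℤ,
            (∀ x : V, B a (w x) + (i : ℝ) = B a' x + (i' : ℝ)) ∧
            (i' < 0 ∨ (i' = 0 ∧ f a' < 0))) →
          i < (κ : ℤ) * (wordLength (simpleAffRefls B Δ θ) w : ℤ) := by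
  have hθΦ : θ ∈ Φ := ((hΦpos θ).1 hθ).1
  have hΔΦ : ∀ b ∈ Δ, b ∈ Φ := fun b hb => ((hΦpos b).1 ((hΔ b).1 hb).1).1
  set C := ∑ b ∈ Φ, |B θ b * (2 / B θ θ)|
  refine ⟨⌈C⌉₊ + 1, Nat.succ_pos _, ?_⟩
  rintro w hw a ha i - hβ ⟨a'', -, i'', hw_eq, hneg⟩
  have hword := Subgroup.exists_list_of_mem_closure_of_inv_mem inv_mem_simpleAffRefls hw
  rcases (wordLength (simpleAffRefls B Δ θ) w).eq_zero_or_pos with hℓ | hℓ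
  · rw [eq_one_of_wordLength_eq_zero hword hℓ] at hw_eq
    exact (not_pos_and_neg_affRoot hpos hw_eq
      (hβ.imp_right (And.imp_right fun h => ((hΦpos a).1 h).2)) hneg).elim
  obtain ⟨l, hlen, hlS, rfl⟩ := exists_list_length_eq_wordLength hword
  obtain ⟨a', -, d, hd, hdC⟩ :=
    (rootShiftBounded_simpleAffRefls hsymm hrefl hΔΦ hθΦ).list_prod hlS ha
  have hi'' : (i'' : ℝ) ≤ 0 := by exact_mod_cast (by omega : i'' ≤ 0)
  have hid : (i : ℝ) = i'' - d := by
    have h := hw_eq 0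
    rw [hd 0] at h
    simp only [map_zero, zero_add] at h
    linarith
  have hC : C < ⌈C⌉₊ + 1 := (Nat.le_ceil C).trans_lt (lt_add_one _)
  have hℓ' : (0 : ℝ) < l.length := by rw [hlen]; exact_mod_cast hℓ
  rw [← hlen]
  have : (i : ℝ) < ((⌈C⌉₊ + 1 : ℕ) : ℝ) * l.length :=
    calc (i : ℝ) ≤ |d| := by linarith [neg_abs_le d]
      _ ≤ l.length * C := hdC
      _ < l.length * (⌈C⌉₊ + 1) := mul_lt_mul_of_pos_left hC hℓ'
      _ = ((⌈C⌉₊ + 1 : ℕ) : ℝ) * l.length := by push_cast; ring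
  exact_mod_cast this

theorem inversion_set_depth_bound
    (B : LinearMap.BilinForm ℝ V)
    (hsymm : ∀ x y : V, B x y = B y x)
    (hpos : ∀ x : V, x ≠ 0 → 0 < B x x)
    (Φ : Finset V)
    (h0 : (0 : V) ∉ Φ)
    (hrefl : ∀ a ∈ Φ, ∀ b ∈ Φ, b - (B a b * (2 / B a a)) • a ∈ Φ)
    (hint : ∀ a ∈ Φ, ∀ b ∈ Φ, ∃ n : ℤ, B a b * (2 / B a a) = (n : ℝ))
    (hspan : Submodule.span ℝ (Φ : Set V) = ⊤)
    (hirr : ¬ ∃ s t : Finset V, s.Nonempty ∧ t.Nonempty ∧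
        (Φ : Set V) = ↑s ∪ ↑t ∧ ∀ a ∈ s, ∀ b ∈ t, B a b = 0)
    (f : V →ₗ[ℝ] ℝ) (hf : ∀ a ∈ Φ, f a ≠ 0)
    (Φpos : Finset V) (hΦpos : ∀ a, a ∈ Φpos ↔ a ∈ Φ ∧ 0 < f a)
    (Δ : Finset V)
    (hΔ : ∀ a, a ∈ Δ ↔ a ∈ Φpos ∧ ¬ ∃ b ∈ Φpos, ∃ c ∈ Φpos, a = b + c)
    (θ : V) (hθ : θ ∈ Φpos)
    (hθmax : ∀ b ∈ Φ, θ - b ∈ AddSubmonoid.closure (Δ : Set V)) :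
    ∃ κ : ℕ, 0 < κ ∧
      ∀ w ∈ Subgroup.closure (simpleAffRefls B Δ θ),
        ∀ a ∈ Φ, ∀ i : ℤ, 0 ≤ i →
          -- `β = a + iδ` is a positive affine root
          (0 < i ∨ (i = 0 ∧ a ∈ Φpos)) →
          -- `w⁻¹β` is a negative affine root `(a', i')`
          (∃ a' ∈ Φ, ∃ i' : ℤ,
            (∀ x : V, B a (w x) + (i : ℝ) = B a' x + (i' : ℝ)) ∧
            (i' < 0 ∨ (i' = 0 ∧ f a' < 0))) →
          i < (κ : ℤ) * (wordLength (simpleAffRefls B Δ θ) w : ℤ) :=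
  inversion_set_depth_bound_general B hsymm hpos Φ hrefl f Φpos hΦpos Δ hΔ θ hθ

end
end
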